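/- Let x ∈ ℝ^{n×q}, let ν ∈ ℝⁿ be nonzero, let Σ ∈ ℝ^{q×q} be symmetric with Σ_{jj} ≠ 0 for a fixed j ∈ {1, …, q}, let Σ_j denote the j-th column of Σ, define U(y) = y − ν Σ_jᵀ [yᵀν]_j / (‖ν‖₂² Σ_{jj}) for y ∈ ℝ^{n×q}, and for φ ∈ ℝ define x′(φ, j) = x + (φ − [xᵀν]_j) (ν/‖ν‖₂²) (Σ_j/Σ_{jj})ᵀ. Then U(x′(φ, j)) = U(x) for every φ ∈ ℝ. -/

import Mathlib

open Matrix

/-! The map `U` is linear and annihilates the rank-one matrix `ν Σ_jᵀ`, because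
`[(ν Σ_jᵀ)ᵀ ν]_j = ‖ν‖₂² Σ_{jj}`. The perturbation `x′(φ, j) - x` is a multiple of `ν Σ_jᵀ`,
so it is invisible to `U`. -/

section RankOneResidual

variable {K m p : Type*} [Field K] [Fintype m]

def rankOneResidual (ν : m → K) (s : p → K) (j : p) (y : Matrix m p K) : Matrix m p K :=
  y - ((yᵀ *ᵥ ν) j / ((ν ⬝ᵥ ν) * s j)) • vecMulVec ν s

theorem transpose_vecMulVec_mulVec (u : m → K) (v : p → K) (w : m → K) :
    (vecMulVec u v)ᵀ *ᵥ w = (u ⬝ᵥ w) • v := by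
  rw [mulVec_transpose, vecMul_vecMulVec, dotProduct_comm]

theorem rankOneResidual_add_smul_vecMulVec {ν : m → K} {s : p → K} {j : p}
    (hν : ν ⬝ᵥ ν ≠ 0) (hs : s j ≠ 0) (y : Matrix m p K) (a : K) :
    rankOneResidual ν s j (y + a • vecMulVec ν s) = rankOneResidual ν s j y := by
  have hcoord : ((y + a • vecMulVec ν s)ᵀ *ᵥ ν) j = (yᵀ *ᵥ ν) j + a * ((ν ⬝ᵥ ν) * s j) := by
    simp only [transpose_add, transpose_smul, add_mulVec, smul_mulVec, transpose_vecMulVec_mulVec,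
      Pi.add_apply, Pi.smul_apply, smul_eq_mul]
  rw [rankOneResidual, rankOneResidual, hcoord, add_div, mul_div_cancel_right₀ _ (mul_ne_zero hν hs),
    add_smul]
  abel

end RankOneResidual

theorem U_of_perturbed_matrix_general {n q : ℕ}
    (x : Matrix (Fin n) (Fin q) ℝ) (ν : Fin n → ℝ) (hν : ν ≠ 0)
    (S : Matrix (Fin q) (Fin q) ℝ) (j : Fin q) (hjj : S j j ≠ 0)
    (U : Matrix (Fin n) (Fin q) ℝ → Matrix (Fin n) (Fin q) ℝ)
    (hU : ∀ y : Matrix (Fin n) (Fin q) ℝ,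
      U y = y - ((yᵀ *ᵥ ν) j / ((∑ i, ν i ^ 2) * S j j)) • vecMulVec ν (fun k => S k j))
    (x' : ℝ → Matrix (Fin n) (Fin q) ℝ)
    (hx' : ∀ φ : ℝ, x' φ = x + (φ - (xᵀ *ᵥ ν) j) •
      vecMulVec (fun i => ν i / ∑ i', ν i' ^ 2) (fun k => S k j / S j j)) :
    ∀ φ : ℝ, U (x' φ) = U x := by
  intro φ
  have hnorm : ∑ i, ν i ^ 2 = ν ⬝ᵥ ν := by simp only [dotProduct, sq]
  have hνν : ν ⬝ᵥ ν ≠ 0 := mt dotProduct_self_eq_zero.mp hν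
  have hU' : U = rankOneResidual ν (fun k => S k j) j := funext fun y => by
    rw [hU, hnorm, rankOneResidual]
  have hperturb : x' φ = x + ((φ - (xᵀ *ᵥ ν) j) / ((ν ⬝ᵥ ν) * S j j)) •
      vecMulVec ν (fun k => S k j) := by
    rw [hx', hnorm]
    ext i k
    simp only [Matrix.add_apply, Matrix.smul_apply, vecMulVec_apply, smul_eq_mul]
    field_simp
  rw [hU', hperturb]
  exact rankOneResidual_add_smul_vecMulVec (s := fun k => S k j) hνν hjj _ _

/-- with `U(y) = y − ν Σ_jᵀ [yᵀν]_j / (‖ν‖₂² Σ_{jj})` and the perturbed matrix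
`x′(φ, j) = x + (φ − [xᵀν]_j) (ν/‖ν‖₂²) (Σ_j/Σ_{jj})ᵀ`, we have `U(x′(φ, j)) = U(x)` for
every `φ ∈ ℝ`. -/
theorem U_of_perturbed_matrix {n q : ℕ}
    (x : Matrix (Fin n) (Fin q) ℝ) (ν : Fin n → ℝ) (hν : ν ≠ 0)
    (S : Matrix (Fin q) (Fin q) ℝ) (hsymm : S.IsSymm) (j : Fin q) (hjj : S j j ≠ 0)
    (U : Matrix (Fin n) (Fin q) ℝ → Matrix (Fin n) (Fin q) ℝ)
    (hU : ∀ y : Matrix (Fin n) (Fin q) ℝ,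
      U y = y - ((yᵀ *ᵥ ν) j / ((∑ i, ν i ^ 2) * S j j)) • vecMulVec ν (fun k => S k j))
    (x' : ℝ → Matrix (Fin n) (Fin q) ℝ)
    (hx' : ∀ φ : ℝ, x' φ = x + (φ - (xᵀ *ᵥ ν) j) •
      vecMulVec (fun i => ν i / ∑ i', ν i' ^ 2) (fun k => S k j / S j j)) :
    ∀ φ : ℝ, U (x' φ) = U x :=
  U_of_perturbed_matrix_general x ν hν S j hjj U hU x' hx'
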